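/- arXiv:2201.10098 — 2 statements merged into one kernel-verified Lean document; each statement's English description precedes it below -/
import Mathlib

section
/- Consider the linear difference system ∑_{k=0}^{m-1} d_{m,k} y_k + (d_{m,m} + p_m) y_m = f_m for m = 1,…,M, together with y_0 = μ, where all coefficients satisfy |p_m|, |d_{m,k}| ≤ P. If there exists δ > 0 such that |d_{m,m} + p_m| ≥ ∑_{k=0}^{m-1} |d_{m,k}| + δ for every m = 1,…,M, then the system has a unique solution {y_m}, and this solution satisfies |y_m| ≤ max{ |μ|, (1/δ) max_{1≤k≤m} |f_k| } for all m = 0,…,M. -/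
/-!
With `a m = d m m + p m`, the system is lower triangular and dominance makes every diagonal entry
nonzero, so forward substitution produces the solution and forces uniqueness. For the bound, let
`B m = max |μ| (F m / δ)` with `F m = max_{1 ≤ k ≤ m} |f k|`; it is nondecreasing, and by strong
induction `|a m| |y m| ≤ |f m| + ∑_{k<m} |d m k| |y k| ≤ (δ + ∑_{k<m} |d m k|) B m ≤ |a m| B m`.
-/

open Finset

noncomputable def forwardSubst (c : ℕ → ℕ → ℝ) (a f : ℕ → ℝ) (μ : ℝ) : ℕ → ℝ
  | 0 => μ
  | m + 1 => (f (m + 1) - ∑ k : Fin (m + 1), c (m + 1) k * forwardSubst c a f μ k) / a (m + 1)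

def SolvesLowerTriangular (M : ℕ) (c : ℕ → ℕ → ℝ) (a f : ℕ → ℝ) (y : ℕ → ℝ) : Prop :=
  ∀ m, 1 ≤ m → m ≤ M → ∑ k ∈ range m, c m k * y k + a m * y m = f m

theorem abs_pos_of_sum_abs_add_le {ι : Type*} {s : Finset ι} {g : ι → ℝ} {x δ : ℝ} (hδ : 0 < δ)
    (h : ∑ k ∈ s, |g k| + δ ≤ |x|) : 0 < |x| := by
  linarith [sum_nonneg fun k (_ : k ∈ s) => abs_nonneg (g k)]

section LowerTriangular

variable {M : ℕ} {c : ℕ → ℕ → ℝ} {a f : ℕ → ℝ}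

theorem solvesLowerTriangular_forwardSubst (μ : ℝ) (ha : ∀ m, 1 ≤ m → m ≤ M → a m ≠ 0) :
    SolvesLowerTriangular M c a f (forwardSubst c a f μ) := by
  rintro (_ | m) h1 hM
  · omega
  rw [forwardSubst.eq_2, Fin.sum_univ_eq_sum_range (fun k => c (m + 1) k * forwardSubst c a f μ k)]
  field_simp [ha (m + 1) h1 hM]
  ring

theorem SolvesLowerTriangular.eq_of_initial_eq {y z : ℕ → ℝ} (hy : SolvesLowerTriangular M c a f y)
    (hz : SolvesLowerTriangular M c a f z) (h0 : y 0 = z 0)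
    (ha : ∀ m, 1 ≤ m → m ≤ M → a m ≠ 0) : ∀ m ≤ M, y m = z m := by
  intro m
  induction m using Nat.strong_induction_on with
  | _ m ih =>
    intro hmM
    rcases Nat.eq_zero_or_pos m with rfl | h1
    · exact h0
    have hsum : ∑ k ∈ range m, c m k * y k = ∑ k ∈ range m, c m k * z k :=
      sum_congr rfl fun k hk => by rw [ih k (mem_range.mp hk) ((mem_range.mp hk).le.trans hmM)]
    have hdiag : a m * y m = a m * z m := by
      linarith [hy m h1 hmM, hz m h1 hmM]
    exact mul_left_cancel₀ (ha m h1 hmM) hdiag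

theorem SolvesLowerTriangular.abs_mul_le {y : ℕ → ℝ} (hy : SolvesLowerTriangular M c a f y)
    {m : ℕ} (h1 : 1 ≤ m) (hM : m ≤ M) :
    |a m| * |y m| ≤ |f m| + ∑ k ∈ range m, |c m k| * |y k| := by
  rw [← abs_mul, eq_sub_of_add_eq' (hy m h1 hM)]
  calc |f m - ∑ k ∈ range m, c m k * y k|
      ≤ |f m| + |∑ k ∈ range m, c m k * y k| := abs_sub _ _
    _ ≤ |f m| + ∑ k ∈ range m, |c m k| * |y k| := by
      grw [abs_sum_le_sum_abs]
      simp only [abs_mul, le_refl]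

theorem SolvesLowerTriangular.abs_le_max {y : ℕ → ℝ} (hy : SolvesLowerTriangular M c a f y)
    {δ : ℝ} (hδ : 0 < δ) (hdom : ∀ m, 1 ≤ m → m ≤ M → ∑ k ∈ range m, |c m k| + δ ≤ |a m|)
    {F : ℕ → ℝ} (hF : Monotone F) (hfF : ∀ m, 1 ≤ m → m ≤ M → |f m| ≤ F m) :
    ∀ m ≤ M, |y m| ≤ max |y 0| (1 / δ * F m) := by
  set B : ℕ → ℝ := fun m => max |y 0| (1 / δ * F m)
  have hB : Monotone B := fun k m hkm => max_le_max le_rfl (by gcongr; exact hF hkm)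
  have hB0 : ∀ m, 0 ≤ B m := fun m => (abs_nonneg _).trans (le_max_left _ _)
  intro m
  induction m using Nat.strong_induction_on with
  | _ m ih =>
    intro hmM
    rcases Nat.eq_zero_or_pos m with rfl | h1
    · exact le_max_left _ _
    have hf : |f m| ≤ δ * B m := by
      calc |f m| ≤ F m := hfF m h1 hmM
        _ = δ * (1 / δ * F m) := by field_simp
        _ ≤ δ * B m := by gcongr; exact le_max_right _ _
    have hsum : ∑ k ∈ range m, |c m k| * |y k| ≤ (∑ k ∈ range m, |c m k|) * B m := by
      rw [sum_mul]
      gcongr with k hk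
      have hk := mem_range.mp hk
      exact (ih k hk (by omega)).trans (hB hk.le)
    refine le_of_mul_le_mul_left ?_ (abs_pos_of_sum_abs_add_le hδ (hdom m h1 hmM))
    calc |a m| * |y m| ≤ |f m| + ∑ k ∈ range m, |c m k| * |y k| := hy.abs_mul_le h1 hmM
      _ ≤ (∑ k ∈ range m, |c m k| + δ) * B m := by linarith
      _ ≤ |a m| * B m := by gcongr; exact hdom m h1 hmM

end LowerTriangular

section FinsetSupremum

variable {ι : Type*} {s t : Finset ι} {g : ι → ℝ}

theorem bddAbove_range_iSup_mem (s : Finset ι) (g : ι → ℝ) :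
    BddAbove (Set.range fun i => ⨆ _ : i ∈ s, g i) := by
  -- for `i ∉ s` the supremum over the empty index type is the junk value `0`
  refine ((s.finite_toSet.image g).insert 0).bddAbove.mono ?_
  rintro _ ⟨i, rfl⟩
  by_cases hi : i ∈ s
  · exact Or.inr ⟨i, hi, (ciSup_pos (f := fun _ => g i) hi).symm⟩
  · have : IsEmpty (i ∈ s) := ⟨hi⟩
    exact Or.inl (Real.iSup_of_isEmpty _)

theorem le_biSup_finset {i : ι} (hi : i ∈ s) : g i ≤ ⨆ j ∈ s, g j :=
  le_ciSup_of_le (bddAbove_range_iSup_mem s g) i (ciSup_pos (f := fun _ => g i) hi).ge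

theorem biSup_finset_nonneg (hg : ∀ i, 0 ≤ g i) : 0 ≤ ⨆ i ∈ s, g i :=
  Real.iSup_nonneg fun i => Real.iSup_nonneg fun _ => hg i

theorem biSup_finset_mono (hst : s ⊆ t) (hg : ∀ i, 0 ≤ g i) :
    ⨆ i ∈ s, g i ≤ ⨆ i ∈ t, g i :=
  Real.iSup_le (fun _ => Real.iSup_le (fun hi => le_biSup_finset (hst hi))
    (biSup_finset_nonneg hg)) (biSup_finset_nonneg hg)

end FinsetSupremum

theorem well_conditioned_difference_system_general
    (M : ℕ) (d : ℕ → ℕ → ℝ) (p f : ℕ → ℝ) (μ δ : ℝ)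
    (hδ : 0 < δ)
    (hdom : ∀ m, 1 ≤ m → m ≤ M →
      ∑ k ∈ Finset.range m, |d m k| + δ ≤ |d m m + p m|) :
    ∃ y : ℕ → ℝ,
      (y 0 = μ ∧
        (∀ m, 1 ≤ m → m ≤ M →
          ∑ k ∈ Finset.range m, d m k * y k + (d m m + p m) * y m = f m) ∧
        (∀ m ≤ M, |y m| ≤ max |μ| ((1 / δ) * ⨆ k ∈ Finset.Icc 1 m, |f k|))) ∧
      ∀ z : ℕ → ℝ, z 0 = μ →
        (∀ m, 1 ≤ m → m ≤ M →
          ∑ k ∈ Finset.range m, d m k * z k + (d m m + p m) * z m = f m) →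
        ∀ m ≤ M, z m = y m := by
  have hdiag : ∀ m, 1 ≤ m → m ≤ M → d m m + p m ≠ 0 := fun m h1 hM =>
    abs_pos.mp (abs_pos_of_sum_abs_add_le hδ (hdom m h1 hM))
  set y := forwardSubst d (fun m => d m m + p m) f μ
  have hy0 : y 0 = μ := forwardSubst.eq_1 ..
  have hy : SolvesLowerTriangular M d (fun m => d m m + p m) f y :=
    solvesLowerTriangular_forwardSubst μ hdiag
  have hmono : Monotone fun m => ⨆ k ∈ Icc 1 m, |f k| := fun m n hmn =>
    biSup_finset_mono (Icc_subset_Icc_right hmn) fun k => abs_nonneg (f k)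
  refine ⟨y, ⟨hy0, hy, ?_⟩, fun z hz0 hz => ?_⟩
  · rw [← hy0]
    exact hy.abs_le_max hδ hdom hmono fun m h1 _ =>
      le_biSup_finset (g := fun k => |f k|) (mem_Icc.mpr ⟨h1, le_rfl⟩)
  · exact SolvesLowerTriangular.eq_of_initial_eq (a := fun m => d m m + p m) hz hy
      (hz0.trans hy0.symm) hdiag

/-- under strict diagonal dominance with margin δ, the difference system
has a unique solution, and the solution satisfies
|y_m| ≤ max{|μ|, (1/δ) max_{1≤k≤m} |f_k|}. -/
theorem well_conditioned_difference_system
    (M : ℕ) (d : ℕ → ℕ → ℝ) (p f : ℕ → ℝ) (μ P δ : ℝ)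
    (hP : ∀ m ≤ M, |p m| ≤ P)
    (hd : ∀ m ≤ M, ∀ k ≤ m, |d m k| ≤ P)
    (hδ : 0 < δ)
    (hdom : ∀ m, 1 ≤ m → m ≤ M →
      ∑ k ∈ Finset.range m, |d m k| + δ ≤ |d m m + p m|) :
    ∃ y : ℕ → ℝ,
      (y 0 = μ ∧
        (∀ m, 1 ≤ m → m ≤ M →
          ∑ k ∈ Finset.range m, d m k * y k + (d m m + p m) * y m = f m) ∧
        (∀ m ≤ M, |y m| ≤ max |μ| ((1 / δ) * ⨆ k ∈ Finset.Icc 1 m, |f k|))) ∧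
      ∀ z : ℕ → ℝ, z 0 = μ →
        (∀ m, 1 ≤ m → m ≤ M →
          ∑ k ∈ Finset.range m, d m k * z k + (d m m + p m) * z m = f m) →
        ∀ m ≤ M, z m = y m :=
  well_conditioned_difference_system_general M d p f μ δ hδ hdom
end

section
/- Suppose the coefficients of the difference system satisfy, uniformly in m and M, the conditions (|d_{m,m}+p_m| − ∑_{k<m}|d_{m,k}|)/(|d_{m,m}+p_m| + ∑_{k<m}|d_{m,k}|) ≥ A > 0 and max{|d_{m,m}+p_m|, ∑_{k<m}|d_{m,k}|} ≥ B > 0. Then the strict dominance condition |d_{m,m}+p_m| ≥ ∑_{k<m}|d_{m,k}| + δ holds with δ = A·B, and the solution satisfies |y_m| ≤ max{|μ|, (1/(A·B)) max_k |f_k|}. -/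
/-!
Row `m` of the system gives `|a_m| |y_m| ≤ |f_m| + (∑_{k<m} |d_{m,k}|) max_{k<m} |y_k|`, so
dominance `∑_{k<m} |d_{m,k}| + δ ≤ |a_m|` together with `|f_m| ≤ δ K` propagates the bound
`|y_k| ≤ K` from `k < m` to `k = m`. The ratio and size conditions yield dominance with
`δ = A B`, and `K = max |μ| (max_k |f_k| / (A B))` satisfies `|f_k| ≤ δ K`.
-/

open Finset

theorem Finset.le_ciSup_of_mem {ι α : Type*} [ConditionallyCompleteLattice α] {s : Finset ι}
    (f : ι → α) {i : ι} (hi : i ∈ s) : f i ≤ ⨆ j ∈ s, f j := by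
  refine le_ciSup₂ (f := fun j (_ : j ∈ s) => f j) ((s.finite_toSet.image f).bddAbove.mono ?_) i hi
  rintro _ ⟨_, ⟨j, rfl⟩, hj, rfl⟩
  exact ⟨j, hj, rfl⟩

/-- `A * B ≤ A * max D S ≤ A * (D + S) ≤ D - S`; when `D + S = 0` the quotient is the junk
value `0`, which forces `A = 0`. -/
theorem add_mul_le_of_le_div_of_le_max {D S A B : ℝ} (hD : 0 ≤ D) (hS : 0 ≤ S) (hA : 0 ≤ A)
    (hratio : A ≤ (D - S) / (D + S)) (hmax : B ≤ max D S) : S + A * B ≤ D := by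
  have hmax_le : max D S ≤ D + S := max_le (by linarith) (by linarith)
  rcases (add_nonneg hD hS).eq_or_lt with hzero | hpos
  · rw [← hzero, div_zero] at hratio
    have : A = 0 := le_antisymm hratio hA
    subst this
    linarith
  · have hAB : A * B ≤ A * (D + S) := mul_le_mul_of_nonneg_left (hmax.trans hmax_le) hA
    have hAratio : A * (D + S) ≤ D - S := (le_div_iff₀ hpos).1 hratio
    linarith

theorem abs_le_of_dominant_row {m : ℕ} {c y : ℕ → ℝ} {a x b δ K : ℝ} (hδ : 0 < δ)
    (hdom : ∑ k ∈ range m, |c k| + δ ≤ |a|) (hb : |b| ≤ δ * K) (hy : ∀ k < m, |y k| ≤ K)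
    (heq : ∑ k ∈ range m, c k * y k + a * x = b) : |x| ≤ K := by
  have hsum : |∑ k ∈ range m, c k * y k| ≤ (∑ k ∈ range m, |c k|) * K := by
    calc |∑ k ∈ range m, c k * y k|
        ≤ ∑ k ∈ range m, |c k| * |y k| := by
          simpa only [abs_mul] using abs_sum_le_sum_abs (fun k => c k * y k) (range m)
      _ ≤ ∑ k ∈ range m, |c k| * K :=
          sum_le_sum fun k hk => mul_le_mul_of_nonneg_left (hy k (mem_range.1 hk)) (abs_nonneg _)
      _ = (∑ k ∈ range m, |c k|) * K := (sum_mul ..).symm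
  have hax : |a| * |x| ≤ (∑ k ∈ range m, |c k| + δ) * K := by
    calc |a| * |x| = |b - ∑ k ∈ range m, c k * y k| := by
          rw [← abs_mul, ← heq, add_sub_cancel_left]
      _ ≤ |b| + |∑ k ∈ range m, c k * y k| := abs_sub _ _
      _ ≤ (∑ k ∈ range m, |c k| + δ) * K := by linarith
  have hpos : 0 < ∑ k ∈ range m, |c k| + δ := by positivity
  exact le_of_mul_le_mul_left ((mul_le_mul_of_nonneg_right hdom (abs_nonneg x)).trans hax) hpos

theorem abs_le_of_dominant_triangular {N : ℕ} {d : ℕ → ℕ → ℝ} {a f y : ℕ → ℝ}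
    {δ K : ℝ} (hδ : 0 < δ)
    (hdom : ∀ m, 1 ≤ m → m ≤ N → ∑ k ∈ range m, |d m k| + δ ≤ |a m|)
    (hf : ∀ m, 1 ≤ m → m ≤ N → |f m| ≤ δ * K) (hy₀ : |y 0| ≤ K)
    (heq : ∀ m, 1 ≤ m → m ≤ N → ∑ k ∈ range m, d m k * y k + a m * y m = f m) :
    ∀ m ≤ N, |y m| ≤ K := by
  intro m
  induction m using Nat.strong_induction_on with
  | _ m ih =>
    intro hmN
    rcases Nat.eq_zero_or_pos m with rfl | hm
    · exact hy₀
    · exact abs_le_of_dominant_row hδ (hdom m hm hmN) (hf m hm hmN)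
        (fun k hk => ih k hk (hk.le.trans hmN)) (heq m hm hmN)

/-- the alternative sufficient condition with constants A, B implies
strict diagonal dominance with δ = A·B, and solutions satisfy the corresponding bound. -/
theorem alternative_well_conditioning
    (M : ℕ) (d : ℕ → ℕ → ℝ) (p f : ℕ → ℝ) (μ A B : ℝ)
    (hA : 0 < A) (hB : 0 < B)
    (hratio : ∀ m, 1 ≤ m → m ≤ M →
      A ≤ (|d m m + p m| - ∑ k ∈ Finset.range m, |d m k|) /
            (|d m m + p m| + ∑ k ∈ Finset.range m, |d m k|))
    (hmax : ∀ m, 1 ≤ m → m ≤ M →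
      B ≤ max |d m m + p m| (∑ k ∈ Finset.range m, |d m k|)) :
    (∀ m, 1 ≤ m → m ≤ M →
      ∑ k ∈ Finset.range m, |d m k| + A * B ≤ |d m m + p m|) ∧
    ∀ y : ℕ → ℝ, y 0 = μ →
      (∀ m, 1 ≤ m → m ≤ M →
        ∑ k ∈ Finset.range m, d m k * y k + (d m m + p m) * y m = f m) →
      ∀ m ≤ M, |y m| ≤ max |μ| ((1 / (A * B)) * ⨆ k ∈ Finset.Icc 1 m, |f k|) := by
  have hdom : ∀ m, 1 ≤ m → m ≤ M → ∑ k ∈ range m, |d m k| + A * B ≤ |d m m + p m| :=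
    fun m h1 hm => add_mul_le_of_le_div_of_le_max (abs_nonneg _)
      (sum_nonneg fun _ _ => abs_nonneg _) hA.le (hratio m h1 hm) (hmax m h1 hm)
  refine ⟨hdom, fun y hy₀ heq m hm => ?_⟩
  have hAB : 0 < A * B := mul_pos hA hB
  set F := ⨆ k ∈ Icc 1 m, |f k|
  have hf : ∀ k, 1 ≤ k → k ≤ m → |f k| ≤ A * B * max |μ| (1 / (A * B) * F) := by
    intro k hk1 hkm
    calc |f k| ≤ F := le_ciSup_of_mem (fun j => |f j|) (mem_Icc.2 ⟨hk1, hkm⟩)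
      _ = A * B * (1 / (A * B) * F) := by field_simp
      _ ≤ A * B * max |μ| (1 / (A * B) * F) := by gcongr; exact le_max_right _ _
  exact abs_le_of_dominant_triangular hAB (fun k hk1 hkm => hdom k hk1 (hkm.trans hm))
    hf (hy₀ ▸ le_max_left _ _) (fun k hk1 hkm => heq k hk1 (hkm.trans hm)) m le_rfl
end
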